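/- The automorphism group of the 3-dimensional algebra T³*₀₁ over ℂ (basis e₁,e₂,e₃ with only nonzero product e₁e₁ = e₂) consists exactly of the linear maps whose matrix in the basis (e₁,e₂,e₃) has the form [[x,0,0],[y,x²,u],[z,0,v]] with x ≠ 0 and v ≠ 0. -/

import Mathlib

/-- T³*₀₁: basis `e₁,e₂,e₃`, only nonzero product `e₁e₁ = e₂`. -/
def mulT3s01 (x y : Fin 3 → ℂ) : Fin 3 → ℂ :=
  (x 0 * y 0) • (Pi.single 1 1 : Fin 3 → ℂ)

lemma decomp3 (a : Fin 3 → ℂ) :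
    a = a 0 • (Pi.single 0 1 : Fin 3 → ℂ) + a 1 • (Pi.single 1 1 : Fin 3 → ℂ)
      + a 2 • (Pi.single 2 1 : Fin 3 → ℂ) := by
  funext i; fin_cases i <;> simp [Pi.single_apply]

/-- The automorphisms of T³*₀₁ are exactly the linear bijections with matrix
`[[x,0,0],[y,x²,u],[z,0,v]]` (columns `φe₁ = xe₁+ye₂+ze₃`, `φe₂ = x²e₂`, `φe₃ = ue₂+ve₃`),
with `x ≠ 0` and `v ≠ 0`. -/
theorem stmt11 (φ : (Fin 3 → ℂ) ≃ₗ[ℂ] (Fin 3 → ℂ)) :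
    (∀ a b, φ (mulT3s01 a b) = mulT3s01 (φ a) (φ b)) ↔
    ∃ x y z u v : ℂ, x ≠ 0 ∧ v ≠ 0 ∧
      φ (Pi.single 0 1) = x • (Pi.single 0 1 : Fin 3 → ℂ) + y • (Pi.single 1 1 : Fin 3 → ℂ)
        + z • (Pi.single 2 1 : Fin 3 → ℂ) ∧
      φ (Pi.single 1 1) = (x ^ 2) • (Pi.single 1 1 : Fin 3 → ℂ) ∧
      φ (Pi.single 2 1) = u • (Pi.single 1 1 : Fin 3 → ℂ) + v • (Pi.single 2 1 : Fin 3 → ℂ) := by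
  constructor
  · intro h
    set x := φ (Pi.single 0 1) 0 with hx
    set y := φ (Pi.single 0 1) 1 with hy
    set z := φ (Pi.single 0 1) 2 with hz
    set u := φ (Pi.single 2 1) 1 with hu
    set v := φ (Pi.single 2 1) 2 with hv
    have h1 : φ (Pi.single 1 1) = (x ^ 2) • (Pi.single 1 1 : Fin 3 → ℂ) := by
      have := h (Pi.single 0 1) (Pi.single 0 1)
      simp only [mulT3s01] at this
      simp only [Pi.single_eq_same, one_mul, one_smul] at this
      rw [this]; ring_nf; rfl
    have hxne : x ≠ 0 := by
      intro h0
      have : φ (Pi.single 1 1) = φ 0 := by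
        rw [h1, h0, map_zero]; simp
      have := φ.injective this
      have := congrFun this 1
      simp at this
    have h20 : φ (Pi.single 2 1) 0 = 0 := by
      have := h (Pi.single 2 1) (Pi.single 2 1)
      simp only [mulT3s01] at this
      simp only [Pi.single_eq_of_ne (by decide : (0:Fin 3) ≠ 2), mul_zero, zero_mul,
        zero_smul, map_zero] at this
      have := congrFun this 1
      simp only [Pi.zero_apply, Pi.smul_apply, Pi.single_eq_same, smul_eq_mul, mul_one] at this
      have := mul_self_eq_zero.mp this.symm
      exact this
    have h2 : φ (Pi.single 2 1) = u • (Pi.single 1 1 : Fin 3 → ℂ)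
        + v • (Pi.single 2 1 : Fin 3 → ℂ) := by
      conv_lhs => rw [decomp3 (φ (Pi.single 2 1))]
      rw [h20]; simp; rfl
    have hvne : v ≠ 0 := by
      intro h0
      have heq : φ ((u / x ^ 2) • (Pi.single 1 1 : Fin 3 → ℂ)) = φ (Pi.single 2 1) := by
        rw [map_smul, h1, h2, h0, smul_smul, div_mul_cancel₀ _ (pow_ne_zero 2 hxne)]
        simp
      have := congrFun (φ.injective heq) 2
      simp [Pi.single_apply] at this
    exact ⟨x, y, z, u, v, hxne, hvne, by rw [decomp3 (φ (Pi.single 0 1))], h1, h2⟩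
  · rintro ⟨x, y, z, u, v, hx, hv, h0, h1, h2⟩ a b
    have key : ∀ c : Fin 3 → ℂ, φ c 0 = c 0 * x := by
      intro c
      conv_lhs => rw [decomp3 c]
      rw [map_add, map_add, map_smul, map_smul, map_smul, h0, h1, h2]
      simp [Pi.single_apply]
    simp only [mulT3s01, map_smul, h1, key, smul_smul]
    ring_nf
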